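/- arXiv:1208.1585 — 4 statements merged into one kernel-verified Lean document; each statement's English description precedes it below -/
import Mathlib

section
/- Every boundary class is the boundary of a Schunck class: if 𝔜 is a class of primitive finite-dimensional soluble Lie algebras over F, closed under isomorphism, such that no member of 𝔜 is isomorphic to a proper quotient of a member of 𝔜, then there exists a Schunck class 𝔥 of soluble Lie algebras over F with b(𝔥) = 𝔜. -/
/-!
Common definitions: classes of finite-dimensional soluble Lie algebras over a field `F`,
Schunck classes, projectors, strong containment, boundaries, avoidance classes,
formations, saturated formations, residuals, the quotient class `𝔥/𝔑`,
central/hypercentral modules (via split extensions), Fitting null components,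
and locally defined formations.
-/

universe u

namespace SchunckLie

variable (F : Type u) [Field F]

/-- A class of Lie algebras over `F`: a predicate on Lie algebras over `F`
(in a fixed universe). -/
abbrev LieClass : Type (u + 1) :=
  ∀ (L : Type u) [LieRing L] [LieAlgebra F L], Prop

/-- `L` is a finite-dimensional soluble Lie algebra over `F`. -/
def IsFDSol (L : Type u) [LieRing L] [LieAlgebra F L] : Prop :=
  FiniteDimensional F L ∧ LieAlgebra.IsSolvable L

/-- A class of Lie algebras is closed under isomorphism. -/
def IsoClosed (C : LieClass F) : Prop :=
  ∀ (L L' : Type u) [LieRing L] [LieAlgebra F L] [LieRing L'] [LieAlgebra F L'],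
    Nonempty (L ≃ₗ⁅F⁆ L') → C L → C L'

/-- A bundled finite-dimensional soluble Lie algebra over `F`. -/
structure Bundled (F : Type u) [Field F] : Type (u + 1) where
  carrier : Type u
  [lieRing : LieRing carrier]
  [lieAlgebra : LieAlgebra F carrier]
  fdsol : IsFDSol F carrier

attribute [instance] Bundled.lieRing Bundled.lieAlgebra

variable {L : Type u} [LieRing L] [LieAlgebra F L]

/-- The ideal `A` is self-centralising in `L`, i.e. `C_L(A) = A`. -/
def IsSelfCentralising (A : LieIdeal F L) : Prop :=
  ∀ x : L, (∀ a ∈ A, ⁅x, a⁆ = 0) ↔ x ∈ A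

/-- The subalgebra `M` complements the ideal `A` in `L`. -/
def IsComplementOf (M : LieSubalgebra F L) (A : LieIdeal F L) : Prop :=
  M.toSubmodule ⊔ LieSubmodule.toSubmodule A = ⊤ ∧
    M.toSubmodule ⊓ LieSubmodule.toSubmodule A = ⊥

variable (L) in
/-- A Lie algebra is primitive if it has a minimal ideal `A` with `C_L(A) = A`
which is complemented by a subalgebra. -/
def IsPrimitive : Prop :=
  ∃ A : LieIdeal F L, IsAtom A ∧ IsSelfCentralising F A ∧
    ∃ M : LieSubalgebra F L, IsComplementOf F M A

variable (L) in
/-- The socle of `L`: the sum of the minimal ideals of `L`. -/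
def socle : LieIdeal F L :=
  sSup {A : LieIdeal F L | IsAtom A}

/-- A Schunck class: a nonempty class of finite-dimensional soluble
Lie algebras such that membership is determined by the primitive quotients. -/
def IsSchunckClass (C : LieClass F) : Prop :=
  (∃ B : Bundled F, C B.carrier) ∧
    ∀ (L : Type u) [LieRing L] [LieAlgebra F L], IsFDSol F L →
      (C L ↔ ∀ I : LieIdeal F L, IsPrimitive F (L ⧸ I) → C (L ⧸ I))

/-- The canonical projection onto the quotient by an ideal, as a morphism of Lie algebras. -/
def quotMk (I : LieIdeal F L) : L →ₗ⁅F⁆ L ⧸ I :=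
  { (LieSubmodule.toSubmodule I).mkQ with
    map_lie' := fun {_ _} => rfl }

/-- `H` is a `C`-maximal subalgebra of `L`: `H ∈ C` and `H` is not properly contained
in any subalgebra of `L` belonging to `C`. -/
def IsMaximalIn (C : LieClass F) (H : LieSubalgebra F L) : Prop :=
  C H ∧ ∀ H' : LieSubalgebra F L, H < H' → ¬ C H'

/-- `H` is a `C`-projector of `L`: its image in every quotient of `L` is `C`-maximal. -/
def IsProjector (C : LieClass F) (H : LieSubalgebra F L) : Prop :=
  ∀ I : LieIdeal F L, IsMaximalIn F C ((H.map (quotMk F I) : LieSubalgebra F (L ⧸ I)))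

/-- `𝔥` strongly contains `𝔎`: for every finite-dimensional soluble Lie algebra `L`,
every `𝔥`-projector `H` of `L` and every `𝔎`-projector `K` of `H`, `K` (viewed as a
subalgebra of `L`) is a `𝔎`-projector of `L`. -/
def StronglyContains (𝔥 𝔎 : LieClass F) : Prop :=
  ∀ (L : Type u) [LieRing L] [LieAlgebra F L], IsFDSol F L →
    ∀ H : LieSubalgebra F L, IsProjector F 𝔥 H →
      ∀ K : LieSubalgebra F H, IsProjector F 𝔎 K →
        IsProjector F 𝔎 (K.map H.incl)

/-- The boundary `b(C)`: algebras not in `C` all of whose proper quotients are in `C`. -/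
def boundary (C : LieClass F) : LieClass F :=
  fun L _ _ => ¬ C L ∧ ∀ I : LieIdeal F L, I ≠ ⊥ → C (L ⧸ I)

/-- The avoidance class `a(C)`: primitive algebras all of whose `C`-projectors intersect
the socle trivially. -/
def avoidance (C : LieClass F) : LieClass F :=
  fun P _ _ => IsPrimitive F P ∧
    ∀ H : LieSubalgebra F P, IsProjector F C H →
      H.toSubmodule ⊓ LieSubmodule.toSubmodule (socle F P) = ⊥

/-- Containment of classes (on finite-dimensional soluble algebras). -/
def ClassLE (C D : LieClass F) : Prop :=
  ∀ (L : Type u) [LieRing L] [LieAlgebra F L], IsFDSol F L → C L → D L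

/-- Equality of classes (on finite-dimensional soluble algebras). -/
def ClassEq (C D : LieClass F) : Prop :=
  ∀ (L : Type u) [LieRing L] [LieAlgebra F L], IsFDSol F L → (C L ↔ D L)

/-- The class containing only the zero algebra. -/
def zeroClass : LieClass F := fun L _ _ => Subsingleton L

/-- The class `𝔖` of all (finite-dimensional soluble) Lie algebras. -/
def fullClass : LieClass F := fun _ _ _ => True

/-- A formation: a class closed under quotients and under subdirect products
(i.e. `L/(I ⊓ J)` belongs whenever `L/I` and `L/J` do). -/
def IsFormation (C : LieClass F) : Prop :=
  (∀ (L : Type u) [LieRing L] [LieAlgebra F L], IsFDSol F L →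
      C L → ∀ I : LieIdeal F L, C (L ⧸ I)) ∧
  (∀ (L : Type u) [LieRing L] [LieAlgebra F L], IsFDSol F L →
      ∀ I J : LieIdeal F L, C (L ⧸ I) → C (L ⧸ J) → C (L ⧸ (I ⊓ J)))

variable (L) in
/-- The Frattini ideal of `L`: the largest ideal contained in every maximal subalgebra. -/
def frattiniIdeal : LieIdeal F L :=
  sSup {I : LieIdeal F L |
    ∀ M : LieSubalgebra F L, IsCoatom M → LieSubmodule.toSubmodule I ≤ M.toSubmodule}

/-- A saturated formation: a formation `C` such that `L/φ(L) ∈ C` implies `L ∈ C`. -/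
def IsSaturatedFormation (C : LieClass F) : Prop :=
  IsFormation F C ∧
    ∀ (L : Type u) [LieRing L] [LieAlgebra F L], IsFDSol F L →
      C (L ⧸ frattiniIdeal F L) → C L

variable (L) in
/-- The `C`-residual of `L`: the smallest ideal with quotient in `C`. -/
def residual (C : LieClass F) : LieIdeal F L :=
  sInf {I : LieIdeal F L | C (L ⧸ I)}

variable (L) in
/-- The nilradical of `L`: the largest nilpotent ideal. -/
def nilradical : LieIdeal F L :=
  sSup {I : LieIdeal F L | LieRing.IsNilpotent I}

/-- The quotient class `𝔥/𝔑` of a class `𝔥`: all quotients `L/A` with `L ∈ 𝔥` and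
`A` an ideal of `L` containing the nilradical `N(L)`. -/
def quotByNil (C : LieClass F) : LieClass F :=
  fun Q _ _ => ∃ B : Bundled F, C B.carrier ∧
    ∃ A : LieIdeal F B.carrier, nilradical F B.carrier ≤ A ∧
      Nonempty ((B.carrier ⧸ A) ≃ₗ⁅F⁆ Q)

/-- The centraliser `C_L(A/B)` of a chief factor `A/B`, as an ideal of `L`. -/
def chiefCentraliser (A B : LieIdeal F L) : LieIdeal F L where
  carrier := {x : L | ∀ a ∈ A, ⁅x, a⁆ ∈ B}
  zero_mem' := by intro a _; rw [zero_lie]; exact B.zero_mem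
  add_mem' := by
    intro x y hx hy a ha
    rw [add_lie]
    exact B.add_mem (hx a ha) (hy a ha)
  smul_mem' := by
    intro t x hx a ha
    rw [smul_lie]
    exact B.smul_mem t (hx a ha)
  lie_mem := by
    intro y x hx a ha
    rw [lie_lie]
    exact B.sub_mem (B.lie_mem (hx a ha)) (hx _ (A.lie_mem ha))

section Modules

variable (L : Type u) [LieRing L] [LieAlgebra F L]
variable (V : Type u) [AddCommGroup V] [Module F V] [LieRingModule L V]

/-- The split extension of the `L`-module `V` by `L`: the Lie ring structure
on `L × V` with bracket `⁅(x,v),(y,w)⁆ = (⁅x,y⁆, x·w − y·v)`. -/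
instance splitExtLieRing : LieRing (L × V) where
  bracket x y := (⁅x.1, y.1⁆, ⁅x.1, y.2⁆ - ⁅y.1, x.2⁆)
  add_lie x y z := by
    refine Prod.ext ?_ ?_ <;> simp [add_lie, lie_add] <;> abel
  lie_add x y z := by
    refine Prod.ext ?_ ?_ <;> simp [add_lie, lie_add] <;> abel
  lie_self x := by
    refine Prod.ext ?_ ?_ <;> simp
  leibniz_lie x y z := by
    refine Prod.ext ?_ ?_
    · exact leibniz_lie x.1 y.1 z.1
    · show ⁅x.1, ⁅y.1, z.2⁆ - ⁅z.1, y.2⁆⁆ - ⁅⁅y.1, z.1⁆, x.2⁆ = _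
      simp only [lie_sub, lie_lie, Prod.snd_add, Prod.fst_add]
      abel

/-- The split extension `L ⋉ V` is a Lie algebra over `F`. -/
instance splitExtLieAlgebra [LieModule F L V] : LieAlgebra F (L × V) where
  lie_smul t x y := by
    refine Prod.ext ?_ ?_
    · exact lie_smul t x.1 y.1
    · show ⁅x.1, t • y.2⁆ - ⁅t • y.1, x.2⁆ = t • (⁅x.1, y.2⁆ - ⁅y.1, x.2⁆)
      rw [lie_smul, smul_lie, smul_sub]

variable [LieModule F L V]

/-- The ideal `C_L(V) ⋉ 0` of the split extension `L ⋉ V`. -/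
def centKer : LieIdeal F (L × V) where
  carrier := {p : L × V | (∀ v : V, ⁅p.1, v⁆ = 0) ∧ p.2 = 0}
  zero_mem' := ⟨fun v => by rw [Prod.fst_zero, zero_lie], Prod.snd_zero⟩
  add_mem' := by
    rintro x y ⟨hx, hx2⟩ ⟨hy, hy2⟩
    refine ⟨fun v => ?_, ?_⟩
    · rw [Prod.fst_add, add_lie, hx v, hy v, add_zero]
    · rw [Prod.snd_add, hx2, hy2, add_zero]
  smul_mem' := by
    rintro t x ⟨hx, hx2⟩
    refine ⟨fun v => ?_, ?_⟩
    · rw [Prod.smul_fst, smul_lie, hx v, smul_zero]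
    · rw [Prod.smul_snd, hx2, smul_zero]
  lie_mem := by
    rintro x m ⟨hm, hm2⟩
    constructor
    · intro v
      show ⁅⁅x.1, m.1⁆, v⁆ = 0
      rw [lie_lie]
      simp [hm]
    · show ⁅x.1, m.2⁆ - ⁅m.1, x.2⁆ = 0
      rw [hm2, lie_zero, hm x.2, sub_zero]

/-- The module `V` is `C`-central: the split extension of `V` by `L/C_L(V)`,
realised as the quotient of the split extension `L ⋉ V` by the ideal `C_L(V) ⋉ 0`,
lies in the class `C`. -/
def IsCentralMod (C : LieClass F) : Prop :=
  C ((L × V) ⧸ centKer F L V)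

/-- The section `X/Y` of the module `V` determined by submodules `Y ≤ X`. -/
abbrev sect (X Y : LieSubmodule F L V) : Type u :=
  (↥X) ⧸ (LieSubmodule.comap X.incl Y)

/-- The submodule `J` is `C`-hypercentral in `V`: every irreducible section of `V`
below `J` is `C`-central. -/
def IsHypercentralBelow (C : LieClass F) (J : LieSubmodule F L V) : Prop :=
  ∀ X Y : LieSubmodule F L V, Y ≤ X → X ≤ J →
    LieModule.IsIrreducible F L (sect F L V X Y) →
      IsCentralMod F L (sect F L V X Y) C

/-- The module `V` is `C`-hypercentral: every irreducible section (in particular every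
composition factor) is `C`-central. -/
def IsHypercentralMod (C : LieClass F) : Prop :=
  IsHypercentralBelow F L V C ⊤

/-- The largest `C`-hypercentral submodule `V^{(L,C+)}` of `V`. -/
def hyperCentre (C : LieClass F) : LieSubmodule F L V :=
  sSup {W : LieSubmodule F L V | IsHypercentralMod F L W C}

/-- Iterated bracket action of a list of elements of `L` on `V`. -/
def listBracket (b : List L) (v : V) : V :=
  b.foldr (fun x w => ⁅x, w⁆) v

/-- The set `S ⊆ L` acts nilpotently on the set `W ⊆ V`. -/
def ActsNilpotentlyOn (S : Set L) (W : Set V) : Prop :=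
  ∃ n : ℕ, ∀ b : List L, b.length = n → (∀ x ∈ b, x ∈ S) →
    ∀ w ∈ W, listBracket L V b w = 0

/-- The Fitting null component `V^{(B,𝔑+)}`: the largest submodule of `V` on which
`B` acts nilpotently. -/
def fittingNull (S : Set L) : LieSubmodule F L V :=
  sSup {W : LieSubmodule F L V | ActsNilpotentlyOn L V S W}

/-- The centraliser (kernel) `C_L(V)` of the representation of `L` on `V`, as an ideal. -/
def modKer : LieIdeal F L where
  carrier := {x : L | ∀ v : V, ⁅x, v⁆ = 0}
  zero_mem' := fun v => zero_lie v
  add_mem' := by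
    intro x y hx hy v
    rw [add_lie, hx v, hy v, add_zero]
  smul_mem' := by
    intro t x hx v
    rw [smul_lie, hx v, smul_zero]
  lie_mem := by
    intro y x hx
    intro v
    rw [lie_lie, hx v, hx ⁅y, v⁆, lie_zero, sub_zero]

/-- A bundled finite-dimensional `L`-module. -/
structure BundledModule : Type (u + 1) where
  carrier : Type u
  [acg : AddCommGroup carrier]
  [mod : Module F carrier]
  [lrm : LieRingModule L carrier]
  [lm : LieModule F L carrier]
  fd : FiniteDimensional F carrier

attribute [instance] BundledModule.acg BundledModule.mod BundledModule.lrm BundledModule.lm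

end Modules

/-- `𝔎` is Gutiérrez García contained in `𝔥` (with `𝔉 = 𝔥/𝔑`): for every `H ∈ 𝔥`,
the `𝔉`-residual `H_𝔉` is `𝔎`-hypercentral in `H`, i.e. every chief factor of `H`
below `H_𝔉` is `𝔎`-central as an `H`-module. -/
def GGContained (𝔎 𝔥 : LieClass F) : Prop :=
  ∀ (H : Type u) [LieRing H] [LieAlgebra F H], IsFDSol F H → 𝔥 H →
    IsHypercentralBelow F H H 𝔎 (residual F H (quotByNil F 𝔥))

/-- The locally defined formation `loc(C)`: algebras `L` such that `L/C_L(A/B) ∈ C`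
for every chief factor `A/B` of `L`. -/
def locClass (C : LieClass F) : LieClass F :=
  fun L _ _ => ∀ A B : LieIdeal F L, B < A →
    LieModule.IsIrreducible F L (sect F L L A B) →
      C (L ⧸ chiefCentraliser F A B)

end SchunckLie

open SchunckLie

namespace SchunckLie

variable {F : Type u} [Field F]

lemma surjective_quotMk {L : Type u} [LieRing L] [LieAlgebra F L] (I : LieIdeal F L) :
    Function.Surjective (quotMk F I) :=
  fun y => Quotient.inductionOn' y fun x => ⟨x, rfl⟩

lemma exists_quot_equiv {L L' : Type u} [LieRing L] [LieAlgebra F L]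
    [LieRing L'] [LieAlgebra F L'] (f : L →ₗ⁅F⁆ L') (hf : Function.Surjective f)
    (J : LieIdeal F L') :
    ∃ I : LieIdeal F L, (∀ x : L, x ∈ I ↔ f x ∈ J) ∧
      Nonempty ((L ⧸ I) ≃ₗ⁅F⁆ (L' ⧸ J)) := by
  let g : L →ₗ⁅F⁆ L' ⧸ J := (quotMk F J).comp f
  have hg : Function.Surjective g := (surjective_quotMk J).comp hf
  refine ⟨g.ker, fun x => ?_, ⟨?_⟩⟩
  · rw [LieHom.mem_ker]
    exact LieSubmodule.Quotient.mk_eq_zero' (N := J) (m := f x)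
  · refine (g.quotKerEquivRange).trans ?_
    refine (LieEquiv.ofEq g.range ⊤ ?_).trans LieSubalgebra.topEquiv
    rw [(LieHom.range_eq_top g).mpr hg]

noncomputable def equivBot (L : Type u) [LieRing L] [LieAlgebra F L] :
    L ≃ₗ⁅F⁆ (L ⧸ (⊥ : LieIdeal F L)) :=
  LieEquiv.ofBijective (quotMk F ⊥) ⟨fun a b hab => by
      have h : a - b ∈ (⊥ : LieIdeal F L) :=
        (Submodule.Quotient.eq (LieSubmodule.toSubmodule (⊥ : LieIdeal F L))).mp hab
      rw [LieSubmodule.mem_bot, sub_eq_zero] at h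
      exact h,
    surjective_quotMk ⊥⟩

lemma fdsol_quot {L : Type u} [LieRing L] [LieAlgebra F L] (h : IsFDSol F L)
    (I : LieIdeal F L) : IsFDSol F (L ⧸ I) := by
  obtain ⟨h1, h2⟩ := h
  constructor
  · exact inferInstanceAs (FiniteDimensional F (L ⧸ LieSubmodule.toSubmodule I))
  · exact (surjective_quotMk I).lieAlgebra_isSolvable

lemma ideal_eq_of_subsingleton {L : Type u} [LieRing L] [LieAlgebra F L]
    [Subsingleton L] (I J : LieIdeal F L) : I = J := by
  ext x
  rw [Subsingleton.elim x 0]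
  simp

lemma fdsol_of_subsingleton (L : Type u) [LieRing L] [LieAlgebra F L]
    [Subsingleton L] : IsFDSol F L := by
  constructor
  · exact Module.Finite.of_surjective (0 : F →ₗ[F] L)
      (fun y => ⟨0, Subsingleton.elim _ _⟩)
  · exact ⟨⟨0, by ext x; rw [Subsingleton.elim x 0]; simp⟩⟩

lemma not_primitive_of_subsingleton (L : Type u) [LieRing L] [LieAlgebra F L]
    [Subsingleton L] : ¬ IsPrimitive F L := by
  rintro ⟨A, hA, -⟩
  exact hA.1 (ideal_eq_of_subsingleton A ⊥)

end SchunckLie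

attribute [local instance] LieRing.ofAssociativeRing

section test
variable (F : Type u) [Field F]
open SchunckLie

noncomputable example : Bundled F := by
  haveI : Subsingleton (F ⧸ (⊤ : LieIdeal F F)) :=
    Submodule.Quotient.subsingleton_iff.mpr (by rfl)
  exact ⟨F ⧸ (⊤ : LieIdeal F F), fdsol_of_subsingleton _⟩
end test

/-- Every boundary class is the boundary of a Schunck class: if `𝔜` is an
isomorphism-closed class of primitive finite-dimensional soluble Lie algebras over `F`
such that no member of `𝔜` is (isomorphic to) a proper quotient of a member of `𝔜`, then
there is a Schunck class `𝔥` with `b(𝔥) = 𝔜`. -/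
theorem stmt5 (F : Type u) [Field F]
    (𝔜 : LieClass F) (h𝔜iso : IsoClosed F 𝔜)
    (hprim : ∀ (L : Type u) [LieRing L] [LieAlgebra F L], IsFDSol F L →
      𝔜 L → IsPrimitive F L)
    (hquot : ∀ (L : Type u) [LieRing L] [LieAlgebra F L], IsFDSol F L →
      𝔜 L → ∀ I : LieIdeal F L, I ≠ ⊥ → ¬ 𝔜 (L ⧸ I)) :
    ∃ 𝔥 : LieClass F, IsoClosed F 𝔥 ∧ IsSchunckClass F 𝔥 ∧
      ClassEq F (boundary F 𝔥) 𝔜 := by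
  classical
  refine ⟨fun L _ _ => ∀ I : LieIdeal F L, ¬ 𝔜 (L ⧸ I), ?_, ⟨?_, ?_⟩, ?_⟩
  · -- IsoClosed
    rintro L L' _ _ _ _ ⟨e⟩ hL J hY
    obtain ⟨I, -, ⟨ψ⟩⟩ := exists_quot_equiv e.toLieHom e.surjective J
    exact hL I (h𝔜iso _ _ ⟨ψ.symm⟩ hY)
  · -- nonempty
    haveI : Subsingleton (F ⧸ (⊤ : LieIdeal F F)) :=
      Submodule.Quotient.subsingleton_iff.mpr rfl
    refine ⟨⟨F ⧸ (⊤ : LieIdeal F F), fdsol_of_subsingleton _⟩, ?_⟩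
    intro I hY
    haveI : Subsingleton ((F ⧸ (⊤ : LieIdeal F F)) ⧸ I) :=
      (surjective_quotMk I).subsingleton
    exact not_primitive_of_subsingleton _ (hprim _ (fdsol_of_subsingleton _) hY)
  · -- Schunck property
    intro L _ _ hfd
    constructor
    · intro hL I _ J hY
      obtain ⟨K, -, ⟨ψ⟩⟩ := exists_quot_equiv (quotMk F I) (surjective_quotMk I) J
      exact hL K (h𝔜iso _ _ ⟨ψ.symm⟩ hY)
    · intro hAll I hY
      exact hAll I (hprim _ (fdsol_quot hfd I) hY) ⊥
        (h𝔜iso _ _ ⟨equivBot _⟩ hY)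
  · -- boundary = 𝔜
    intro L _ _ hfd
    constructor
    · rintro ⟨hnot, hb⟩
      obtain ⟨I, hI⟩ := not_forall.mp hnot
      rw [not_not] at hI
      by_cases hIbot : I = ⊥
      · subst hIbot
        exact h𝔜iso _ _ ⟨(equivBot L).symm⟩ hI
      · exact absurd hI (hb I hIbot ⊥ ∘ h𝔜iso _ _ ⟨equivBot _⟩)
    · intro hY
      constructor
      · intro hL
        exact hL ⊥ (h𝔜iso _ _ ⟨equivBot _⟩ hY)
      · intro I hIne J hYq
        obtain ⟨K, hmem, ⟨ψ⟩⟩ :=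
          exists_quot_equiv (quotMk F I) (surjective_quotMk I) J
        have hIK : I ≤ K := by
          intro x hx
          refine (hmem x).mpr ?_
          have h0 : quotMk F I x = 0 := LieSubmodule.Quotient.mk_eq_zero'.mpr hx
          rw [h0]
          exact J.zero_mem
        have hKne : K ≠ ⊥ := fun hK => hIne (le_bot_iff.mp (hK ▸ hIK))
        exact hquot L hfd hY K hKne (h𝔜iso _ _ ⟨ψ.symm⟩ hYq)
end

section
/- Let F be a field of characteristic p ≠ 0, let 𝔥 be a saturated formation of finite-dimensional soluble Lie algebras over F, and let 𝔉 = 𝔥/𝔑. Let H ∈ 𝔥 and let V be a finite-dimensional H-module. Then the largest 𝔥-hypercentral H-submodule V^{(H,𝔥+)} of V is contained in the largest submodule V^{(H_𝔉,𝔑+)} of V on which the 𝔉-residual H_𝔉 acts nilpotently. -/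
/-!
Common definitions: classes of finite-dimensional soluble Lie algebras over a field `F`,
Schunck classes, projectors, strong containment, boundaries, avoidance classes,
formations, saturated formations, residuals, the quotient class `𝔥/𝔑`,
central/hypercentral modules (via split extensions), Fitting null components,
and locally defined formations.
-/

universe u

open SchunckLie

namespace SchunckLie
section Stmt9Aux

variable {F : Type u} [Field F]
variable {H : Type u} [LieRing H] [LieAlgebra F H]

section SplitExt

variable (H)
variable (Q : Type u) [AddCommGroup Q] [Module F Q] [LieRingModule H Q] [LieModule F H Q]

lemma splitExt_bracket (x y : H × Q) :
    ⁅x, y⁆ = (⁅x.1, y.1⁆, ⁅x.1, y.2⁆ - ⁅y.1, x.2⁆) := rfl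

/-- The first projection of the split extension, as a Lie algebra morphism. -/
def splitFst : (H × Q) →ₗ⁅F⁆ H :=
  { LinearMap.fst F H Q with map_lie' := fun {_ _} => rfl }

@[simp] lemma splitFst_apply (x : H × Q) : splitFst (F := F) H Q x = x.1 := rfl

lemma splitExt_isSolvable [LieAlgebra.IsSolvable H] [LieModule F H Q] :
    LieAlgebra.IsSolvable (H × Q) := by
  obtain ⟨k, hk⟩ := LieAlgebra.IsSolvable.solvable F H
  refine LieAlgebra.IsSolvable.mk (R := F) (k := k + 1) ?_
  have h1 : LieAlgebra.derivedSeries F (H × Q) k ≤ (splitFst H Q (F := F)).ker := by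
    rw [← LieIdeal.map_eq_bot_iff, eq_bot_iff, ← hk]
    exact LieIdeal.derivedSeries_map_le k
  have h2 : LieAlgebra.derivedSeries F (H × Q) (k + 1) =
      ⁅LieAlgebra.derivedSeries F (H × Q) k, LieAlgebra.derivedSeries F (H × Q) k⁆ := by
    rw [LieAlgebra.derivedSeries_def, LieAlgebra.derivedSeriesOfIdeal_succ]
  rw [h2, eq_bot_iff, LieSubmodule.lie_le_iff]
  intro x hx m hm
  have hx1 : x.1 = 0 := LieHom.mem_ker.mp (h1 hx)
  have hm1 : m.1 = 0 := LieHom.mem_ker.mp (h1 hm)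
  rw [LieSubmodule.mem_bot, splitExt_bracket, hx1, hm1]
  simp

end SplitExt

end Stmt9Aux
section Residual

lemma quotMk_eq_mk {F : Type u} [Field F] {L : Type u} [LieRing L] [LieAlgebra F L]
    (I : LieIdeal F L) (x : L) :
    quotMk F I x = LieSubmodule.Quotient.mk (N := I) x := rfl

variable {F : Type u} [Field F]
variable {H : Type u} [LieRing H] [LieAlgebra F H]

lemma residual_le_modKer (𝔥 : LieClass F) (hH : IsFDSol F H)
    (Q : Type u) [AddCommGroup Q] [Module F Q] [LieRingModule H Q] [LieModule F H Q]
    [FiniteDimensional F Q]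
    (hirr : LieModule.IsIrreducible F H Q)
    (hcent : 𝔥 ((H × Q) ⧸ centKer F H Q)) :
    residual F H (quotByNil F 𝔥) ≤ modKer F H Q := by
  haveI : FiniteDimensional F H := hH.1
  haveI : LieAlgebra.IsSolvable H := hH.2
  haveI : LieAlgebra.IsSolvable (H × Q) := splitExt_isSolvable (F := F) H Q
  haveI : FiniteDimensional F ((H × Q) ⧸ centKer F H Q) :=
    inferInstanceAs (FiniteDimensional F ((H × Q) ⧸ (centKer F H Q).toSubmodule))
  haveI : LieAlgebra.IsSolvable ((H × Q) ⧸ centKer F H Q) := by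
    have hsurj : Function.Surjective (quotMk F (centKer F H Q)) :=
      Submodule.Quotient.mk_surjective (centKer F H Q).toSubmodule
    exact hsurj.lieAlgebra_isSolvable
  haveI := hirr
  haveI : Nontrivial Q := LieModule.nontrivial_of_isIrreducible (R := F) (L := H) (M := Q)
  set C : LieIdeal F H := modKer F H Q with hC
  -- the Lie algebra morphism `φ : (H ⋉ Q)/centKer → H/C`
  have hker : (centKer F H Q).toSubmodule ≤
      LinearMap.ker (((quotMk F C).comp (splitFst (F := F) H Q) :
        (H × Q) →ₗ⁅F⁆ H ⧸ C) : (H × Q) →ₗ[F] H ⧸ C) := by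
    rintro ⟨x, v⟩ hxv
    have h1 : ∀ w : Q, ⁅x, w⁆ = 0 := hxv.1
    simp only [LinearMap.mem_ker]
    show quotMk F C x = 0
    rw [quotMk_eq_mk, LieSubmodule.Quotient.mk_eq_zero']
    exact h1
  have key : ∀ z : H × Q,
      (Submodule.liftQ _ _ hker) (LieSubmodule.Quotient.mk (N := centKer F H Q) z) =
        LieSubmodule.Quotient.mk (N := C) z.1 :=
    fun z => Submodule.liftQ_apply _ _ z
  let φ : ((H × Q) ⧸ centKer F H Q) →ₗ⁅F⁆ H ⧸ C :=
    { Submodule.liftQ _ _ hker with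
      map_lie' := by
        rintro ⟨a⟩ ⟨b⟩
        show (Submodule.liftQ _ _ hker)
            ⁅LieSubmodule.Quotient.mk (N := centKer F H Q) a,
              LieSubmodule.Quotient.mk (N := centKer F H Q) b⁆ =
          ⁅(Submodule.liftQ _ _ hker) (LieSubmodule.Quotient.mk (N := centKer F H Q) a),
            (Submodule.liftQ _ _ hker) (LieSubmodule.Quotient.mk (N := centKer F H Q) b)⁆
        rw [← LieSubmodule.Quotient.mk_bracket, key, key, key,
          ← LieSubmodule.Quotient.mk_bracket]
        rfl }
  have keyφ : ∀ z : H × Q,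
      φ (LieSubmodule.Quotient.mk (N := centKer F H Q) z) =
        LieSubmodule.Quotient.mk (N := C) z.1 := key
  -- bracket computations in the quotient of the split extension
  have brkt : ∀ (x : H) (v w : Q),
      ⁅LieSubmodule.Quotient.mk (N := centKer F H Q) (x, v),
        LieSubmodule.Quotient.mk (N := centKer F H Q) ((0 : H), w)⁆
        = LieSubmodule.Quotient.mk (N := centKer F H Q) ((0 : H), ⁅x, w⁆) := by
    intro x v w
    rw [← LieSubmodule.Quotient.mk_bracket]
    congr 1
    rw [splitExt_bracket]
    simp
  have brkt2 : ∀ (x : H) (v w : Q),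
      ⁅LieSubmodule.Quotient.mk (N := centKer F H Q) ((0 : H), w),
        LieSubmodule.Quotient.mk (N := centKer F H Q) (x, v)⁆
        = LieSubmodule.Quotient.mk (N := centKer F H Q) ((0 : H), -⁅x, w⁆) := by
    intro x v w
    rw [← LieSubmodule.Quotient.mk_bracket]
    congr 1
    rw [splitExt_bracket]
    simp
  -- the nilradical is contained in the kernel of φ
  have hnil : nilradical F ((H × Q) ⧸ centKer F H Q) ≤ φ.ker := by
    refine sSup_le ?_
    intro I hI
    have hI' : LieRing.IsNilpotent I := hI
    intro u hu
    obtain ⟨⟨x, v⟩, rfl⟩ := Submodule.Quotient.mk_surjective (centKer F H Q).toSubmodule u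
    -- the fixed-point submodule of `I` in `Q`
    let Z : LieSubmodule F H Q :=
      { carrier := {w : Q | ∀ (x' : H) (v' : Q),
          LieSubmodule.Quotient.mk (N := centKer F H Q) (x', v') ∈ I → ⁅x', w⁆ = 0}
        zero_mem' := fun x' v' _ => lie_zero x'
        add_mem' := fun {a b} ha hb x' v' h => by
          rw [lie_add, ha x' v' h, hb x' v' h, add_zero]
        smul_mem' := fun t a ha x' v' h => by rw [lie_smul, ha x' v' h, smul_zero]
        lie_mem := fun {y w} hw x' v' h => by
          have h2 : ⁅LieSubmodule.Quotient.mk (N := centKer F H Q) ((y : H), (0 : Q)),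
              LieSubmodule.Quotient.mk (N := centKer F H Q) (x', v')⁆ ∈ I :=
            I.lie_mem h
          rw [← LieSubmodule.Quotient.mk_bracket, splitExt_bracket] at h2
          have h3 := hw ⁅y, x'⁆ (⁅y, v'⁆ - ⁅x', (0 : Q)⁆) h2
          rw [leibniz_lie, hw x' v' h, lie_zero, add_zero, ← lie_skew x' y, neg_lie, h3,
            neg_zero] }
    have memZ : ∀ w : Q, w ∈ Z ↔ ∀ (x' : H) (v' : Q),
        LieSubmodule.Quotient.mk (N := centKer F H Q) (x', v') ∈ I → ⁅x', w⁆ = 0 :=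
      fun w => Iff.rfl
    -- Z is nonzero
    have hZ : Z ≠ ⊥ := by
      intro hbot
      obtain ⟨k, hk⟩ := (LieModule.isNilpotent_iff F I I).mp hI'
      have step : ∀ w : Q, w ≠ 0 → ∃ (x' : H) (v' : Q),
          LieSubmodule.Quotient.mk (N := centKer F H Q) (x', v') ∈ I ∧ ⁅x', w⁆ ≠ 0 := by
        intro w hw
        by_contra hcon
        push_neg at hcon
        have : w ∈ Z := (memZ w).mpr fun x' v' h => hcon x' v' h
        rw [hbot, LieSubmodule.mem_bot] at this
        exact hw this
      have chain : ∀ j : ℕ, ∃ w : Q, w ≠ 0 ∧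
          ∃ hm : LieSubmodule.Quotient.mk (N := centKer F H Q) ((0 : H), w) ∈ I,
            (⟨LieSubmodule.Quotient.mk (N := centKer F H Q) ((0 : H), w), hm⟩ : ↥I) ∈
              LieModule.lowerCentralSeries F (↥I) (↥I) j := by
        intro j
        induction j with
        | zero =>
          obtain ⟨w₀, hw₀⟩ := exists_ne (0 : Q)
          obtain ⟨x', v', hxv, hne⟩ := step w₀ hw₀
          have hmem : LieSubmodule.Quotient.mk (N := centKer F H Q) ((0 : H), ⁅x', w₀⁆) ∈ I := by
            have h5 := I.lie_mem (x := LieSubmodule.Quotient.mk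
              (N := centKer F H Q) ((0 : H), w₀)) hxv
            rw [brkt2] at h5
            have h6 := I.neg_mem h5
            have h7 : -LieSubmodule.Quotient.mk (N := centKer F H Q) ((0 : H), -⁅x', w₀⁆)
                = LieSubmodule.Quotient.mk (N := centKer F H Q) ((0 : H), ⁅x', w₀⁆) := by
              rw [← Submodule.Quotient.mk_neg]
              congr 1
              simp
            rwa [h7] at h6
          exact ⟨⁅x', w₀⁆, hne, hmem, LieSubmodule.mem_top _⟩
        | succ j ih =>
          obtain ⟨w, hw, hm, hlcs⟩ := ih
          obtain ⟨x', v', hxv, hne⟩ := step w hw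
          have hmem : LieSubmodule.Quotient.mk (N := centKer F H Q) ((0 : H), ⁅x', w⁆) ∈ I := by
            have := I.lie_mem (x := LieSubmodule.Quotient.mk
              (N := centKer F H Q) (x', v')) hm
            rwa [brkt] at this
          refine ⟨⁅x', w⁆, hne, hmem, ?_⟩
          have heq : (⁅(⟨LieSubmodule.Quotient.mk (N := centKer F H Q) (x', v'), hxv⟩ : ↥I),
                  (⟨LieSubmodule.Quotient.mk (N := centKer F H Q) ((0 : H), w), hm⟩ : ↥I)⁆ : ↥I)
              = (⟨LieSubmodule.Quotient.mk (N := centKer F H Q) ((0 : H), ⁅x', w⁆), hmem⟩ : ↥I) :=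
            Subtype.ext (brkt x' v' w)
          rw [LieModule.lowerCentralSeries_succ]
          exact heq ▸ LieSubmodule.lie_mem_lie (LieSubmodule.mem_top _) hlcs
      obtain ⟨w, hw, hm, hlcs⟩ := chain k
      rw [hk, LieSubmodule.mem_bot] at hlcs
      have h0 : LieSubmodule.Quotient.mk (N := centKer F H Q) ((0 : H), w) = 0 :=
        congrArg Subtype.val hlcs
      rw [LieSubmodule.Quotient.mk_eq_zero'] at h0
      exact hw h0.2
    -- hence Z = ⊤ by irreducibility, so x acts trivially
    rcases hirr.eq_bot_or_eq_top Z with h | h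
    · exact absurd h hZ
    · have hxC : x ∈ C := by
        intro w
        have hwZ : w ∈ Z := by rw [h]; exact LieSubmodule.mem_top w
        exact (memZ w).mp hwZ x v hu
      rw [LieHom.mem_ker, keyφ,
        LieSubmodule.Quotient.mk_eq_zero']
      exact hxC
  -- conclude
  refine sInf_le ?_
  show quotByNil F 𝔥 (H ⧸ C)
  have hsurjφ : ∀ y : H ⧸ C, y ∈ φ.range := by
    intro y
    obtain ⟨x, rfl⟩ := Submodule.Quotient.mk_surjective C.toSubmodule y
    exact (LieHom.mem_range φ _).mpr
      ⟨LieSubmodule.Quotient.mk (N := centKer F H Q) (x, 0), keyφ (x, 0)⟩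
  refine ⟨⟨(H × Q) ⧸ centKer F H Q, ⟨inferInstance, inferInstance⟩⟩, hcent, φ.ker, hnil, ⟨?_⟩⟩
  exact (φ.quotKerEquivRange).trans
    (LieEquiv.ofBijective φ.range.incl
      ⟨fun a b hab => Subtype.ext hab, fun y => ⟨⟨y, hsurjφ y⟩, rfl⟩⟩)

end Residual
section Chain

variable {F : Type u} [Field F]
variable {H : Type u} [LieRing H] [LieAlgebra F H]

lemma actsNilpotently_of_hypercentral (𝔥 : LieClass F) (hH : IsFDSol F H)
    (M : Type u) [AddCommGroup M] [Module F M] [LieRingModule H M] [LieModule F H M]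
    [FiniteDimensional F M] (hhyp : IsHypercentralBelow F H M 𝔥 ⊤) :
    ∀ b : List H, b.length = Module.finrank F M →
      (∀ x ∈ b, x ∈ residual F H (quotByNil F 𝔥)) →
      ∀ w : M, listBracket H M b w = 0 := by
  classical
  set R : LieIdeal F H := residual F H (quotByNil F 𝔥) with hR
  -- Key Lemma: the residual moves every nonzero submodule strictly down
  have KL : ∀ X : LieSubmodule F H M, X ≠ ⊥ → ⁅R, X⁆ < X := by
    intro X hX
    -- find a maximal proper submodule `Y` of `X`
    set P : ℕ → Prop := fun n => ∃ Y : LieSubmodule F H M, Y < X ∧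
      Module.finrank F Y.toSubmodule = n with hP
    have hP0 : P 0 := ⟨⊥, bot_lt_iff_ne_bot.mpr hX, by
      rw [LieSubmodule.bot_toSubmodule]; exact finrank_bot F M⟩
    obtain ⟨Y, hYX, hYrank⟩ :=
      Nat.findGreatest_spec (m := 0) (Nat.zero_le _) hP0
    set n₀ : ℕ := Nat.findGreatest P (Module.finrank F M) with hn₀
    have hmaxY : ∀ Z : LieSubmodule F H M, Y ≤ Z → Z ≤ X → Z = Y ∨ Z = X := by
      intro Z h1 h2
      rcases eq_or_lt_of_le h2 with heq | hlt
      · exact Or.inr heq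
      · left
        have hZn : Module.finrank F Z.toSubmodule ≤ n₀ :=
          Nat.le_findGreatest (Submodule.finrank_le Z.toSubmodule) ⟨Z, hlt, rfl⟩
      -- `Y ≤ Z` with `finrank Z ≤ finrank Y` forces `Z = Y`
        have h3 : Y.toSubmodule = Z.toSubmodule :=
          Submodule.eq_of_le_of_finrank_le
            ((LieSubmodule.toSubmodule_le_toSubmodule (N := _) (N' := _)).mpr h1) (by rw [hYrank]; exact hZn)
        exact (LieSubmodule.toSubmodule_injective h3).symm
    -- the top section `X/Y` is irreducible
    obtain ⟨m, hmX, hmY⟩ : ∃ m, m ∈ X ∧ m ∉ Y := by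
      by_contra hcon
      push_neg at hcon
      exact hYX.ne (le_antisymm hYX.le fun a ha => hcon a ha) |>.elim
    set N : LieSubmodule F H (↥X) := LieSubmodule.comap X.incl Y with hN
    have hmN : (⟨m, hmX⟩ : ↥X) ∉ N := by
      intro hc
      rw [hN, LieSubmodule.mem_comap] at hc
      exact hmY hc
    haveI hNT : Nontrivial (sect F H M X Y) := by
      refine ⟨LieSubmodule.Quotient.mk (N := N) ⟨m, hmX⟩, 0, ?_⟩
      rw [ne_eq, LieSubmodule.Quotient.mk_eq_zero']
      exact hmN
    have hirr : LieModule.IsIrreducible F H (sect F H M X Y) := by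
      haveI : Nontrivial (LieSubmodule F H (sect F H M X Y)) := by
        refine ⟨⊥, ⊤, fun hc => ?_⟩
        obtain ⟨u, v, huv⟩ := hNT
        apply huv
        have hu : u ∈ (⊥ : LieSubmodule F H (sect F H M X Y)) := by
          rw [hc]; exact LieSubmodule.mem_top u
        have hv : v ∈ (⊥ : LieSubmodule F H (sect F H M X Y)) := by
          rw [hc]; exact LieSubmodule.mem_top v
        rw [LieSubmodule.mem_bot] at hu hv
        rw [hu, hv]
      constructor
      intro Z
      set Z' : LieSubmodule F H M :=
        LieSubmodule.map X.incl (LieSubmodule.comap (LieSubmodule.Quotient.mk' N) Z) with hZ'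
      have hYZ' : Y ≤ Z' := by
        intro a ha
        have haX : a ∈ X := hYX.le ha
        refine (LieSubmodule.mem_map _).mpr ⟨⟨a, haX⟩, ?_, rfl⟩
        rw [LieSubmodule.mem_comap]
        have : LieSubmodule.Quotient.mk' N ⟨a, haX⟩ = 0 := by
          rw [LieSubmodule.Quotient.mk_eq_zero]
          rw [hN, LieSubmodule.mem_comap]
          exact ha
        rw [this]
        exact Z.zero_mem
      have hZ'X : Z' ≤ X := by
        intro a ha
        obtain ⟨z, _, rfl⟩ := (LieSubmodule.mem_map _).mp ha
        exact z.2
      rcases hmaxY Z' hYZ' hZ'X with h | h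
      · left
        rw [eq_bot_iff]
        intro u hu
        obtain ⟨z, rfl⟩ := LieSubmodule.Quotient.surjective_mk' N u
        have hz : (z : M) ∈ Z' := (LieSubmodule.mem_map _).mpr
          ⟨z, by rw [LieSubmodule.mem_comap]; exact hu, rfl⟩
        rw [h] at hz
        rw [LieSubmodule.mem_bot, LieSubmodule.Quotient.mk_eq_zero, hN,
          LieSubmodule.mem_comap]
        exact hz
      · right
        rw [eq_top_iff]
        intro u _
        obtain ⟨z, rfl⟩ := LieSubmodule.Quotient.surjective_mk' N u
        have hz : (z : M) ∈ Z' := by rw [h]; exact z.2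
        obtain ⟨z₂, hz₂, hz₂eq⟩ := (LieSubmodule.mem_map _).mp hz
        have : z₂ = z := Subtype.ext hz₂eq
        rw [← this]
        rw [LieSubmodule.mem_comap] at hz₂
        exact hz₂
    -- the section is 𝔥-central, so the residual annihilates it
    have hcent : IsCentralMod F H (sect F H M X Y) 𝔥 :=
      hhyp X Y hYX.le le_top hirr
    haveI : FiniteDimensional F (↥X) := by
      exact inferInstanceAs (FiniteDimensional F X.toSubmodule)
    haveI : FiniteDimensional F (sect F H M X Y) :=
      inferInstanceAs (FiniteDimensional F ((↥X) ⧸ N.toSubmodule))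
    have hres : R ≤ modKer F H (sect F H M X Y) :=
      residual_le_modKer 𝔥 hH (sect F H M X Y) hirr hcent
    -- hence ⁅R, X⁆ ≤ Y < X
    have hle : ⁅R, X⁆ ≤ Y := by
      rw [LieSubmodule.lie_le_iff]
      intro x hx a ha
      have hx' : x ∈ modKer F H (sect F H M X Y) := hres hx
      have h0 : ⁅x, LieSubmodule.Quotient.mk' N ⟨a, ha⟩⁆ = 0 := hx' _
      rw [← LieModuleHom.map_lie] at h0
      rw [LieSubmodule.Quotient.mk_eq_zero] at h0
      rw [hN, LieSubmodule.mem_comap] at h0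
      exact h0
    exact lt_of_le_of_lt hle hYX
  -- the descending series
  let T : ℕ → LieSubmodule F H M := fun k => Nat.rec ⊤ (fun _ Tk => ⁅R, Tk⁆) k
  have hTs : ∀ k, T (k + 1) = ⁅R, T k⁆ := fun k => rfl
  have hdesc : ∀ k, T k = ⊥ ∨
      Module.finrank F (T k).toSubmodule + k ≤ Module.finrank F M := by
    intro k
    induction k with
    | zero =>
      right
      rw [show (T 0).toSubmodule = ⊤ from LieSubmodule.top_toSubmodule]
      simp [finrank_top]
    | succ k ih =>
      rcases ih with h | h
      · left; rw [hTs, h]; exact LieSubmodule.lie_bot R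
      · by_cases hb : T (k + 1) = ⊥
        · exact Or.inl hb
        · right
          have hkb : T k ≠ ⊥ := by
            intro hc
            apply hb
            rw [hTs, hc]
            exact LieSubmodule.lie_bot R
          have hlt : T (k + 1) < T k := by rw [hTs]; exact KL (T k) hkb
          have hlt' : (T (k + 1)).toSubmodule < (T k).toSubmodule :=
            lt_of_le_of_ne ((LieSubmodule.toSubmodule_le_toSubmodule (N := _) (N' := _)).mpr hlt.le)
              (fun hc => hlt.ne (LieSubmodule.toSubmodule_injective hc))
          have := Submodule.finrank_lt_finrank_of_lt hlt'
          omega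
  have hTbot : T (Module.finrank F M) = ⊥ := by
    rcases hdesc (Module.finrank F M) with h | h
    · exact h
    · have h0 : Module.finrank F (T (Module.finrank F M)).toSubmodule = 0 := by omega
      rw [Submodule.finrank_eq_zero] at h0
      rwa [LieSubmodule.toSubmodule_eq_bot] at h0
  have hmemT : ∀ b : List H, (∀ x ∈ b, x ∈ R) → ∀ w : M,
      listBracket H M b w ∈ T b.length := by
    intro b
    induction b with
    | nil => exact fun _ w => LieSubmodule.mem_top w
    | cons x b ih =>
      intro hb w
      have h1 : listBracket H M (x :: b) w = ⁅x, listBracket H M b w⁆ := rfl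
      rw [h1]
      have h2 : (x :: b).length = b.length + 1 := rfl
      rw [h2, hTs]
      exact LieSubmodule.lie_mem_lie (hb x (List.mem_cons_self (a := x) (l := b)))
        (ih (fun y hy => hb y (List.mem_cons_of_mem x hy)) w)
  intro b hlen hmem w
  have := hmemT b hmem w
  rw [hlen, hTbot, LieSubmodule.mem_bot] at this
  exact this

end Chain
end SchunckLie


/-- Let `𝔥` be a saturated formation, `𝔉 = 𝔥/𝔑`, `H ∈ 𝔥`, and `V` a
finite-dimensional `H`-module.  Then `V^{(H,𝔥+)} ⊆ V^{(H_𝔉,𝔑+)}`. -/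
theorem stmt9 (F : Type u) [Field F] (p : ℕ) (hp : p ≠ 0) [CharP F p]
    (𝔥 : LieClass F) (h𝔥iso : IsoClosed F 𝔥) (h𝔥 : IsSaturatedFormation F 𝔥)
    (H : Type u) [LieRing H] [LieAlgebra F H] (hH : IsFDSol F H) (hmem : 𝔥 H)
    (V : Type u) [AddCommGroup V] [Module F V] [LieRingModule H V] [LieModule F H V]
    (hV : FiniteDimensional F V) :
    (hyperCentre F H V 𝔥 : Set V) ⊆
      (fittingNull F H V ((residual F H (quotByNil F 𝔥)) : Set H) : Set V) := by
  haveI : FiniteDimensional F V := hV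
  have key : hyperCentre F H V 𝔥 ≤
      fittingNull F H V ((residual F H (quotByNil F 𝔥) : LieIdeal F H) : Set H) := by
    refine sSup_le ?_
    intro W hW
    refine le_sSup ?_
    haveI : FiniteDimensional F (↥W) := inferInstanceAs (FiniteDimensional F W.toSubmodule)
    have hn := actsNilpotently_of_hypercentral 𝔥 hH (↥W) hW
    refine ⟨Module.finrank F (↥W), ?_⟩
    intro b hb hbR w hw
    have h2 := hn b hb (fun x hx => hbR x hx) ⟨w, hw⟩
    have h3 : ∀ (c : List H) (z : ↥W),
        listBracket H V c (z : V) = ((listBracket H (↥W) c z : ↥W) : V) := by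
      intro c
      induction c with
      | nil => intro z; rfl
      | cons x c ih =>
        intro z
        show ⁅x, listBracket H V c (z : V)⁆ = _
        rw [ih z]
        rfl
    have h4 : listBracket H V b w = ((listBracket H (↥W) b ⟨w, hw⟩ : ↥W) : V) :=
      h3 b ⟨w, hw⟩
    rw [h4, h2]
    rfl
  exact fun v hv => key hv
end

section
/- Let L be a finite-dimensional Lie algebra over a field F, let A be an ideal of L, and let V be a finite-dimensional L-module with A·V ≠ 0. Then there exist L-submodules Y ⊂ X of V such that in the section V' = X/Y the submodule A·V' is nonzero and is the unique minimal L-submodule of V', i.e. A·V' is contained in every nonzero L-submodule of V'. -/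
/-!
Common definitions: classes of finite-dimensional soluble Lie algebras over a field `F`,
Schunck classes, projectors, strong containment, boundaries, avoidance classes,
formations, saturated formations, residuals, the quotient class `𝔥/𝔑`,
central/hypercentral modules (via split extensions), Fitting null components,
and locally defined formations.
-/

universe u

open SchunckLie

lemma aux {F L M : Type u} [Field F] [LieRing L] [LieAlgebra F L]
    [AddCommGroup M] [Module F M] [LieRingModule L M] [LieModule F L M]
    [FiniteDimensional F M] (A : LieIdeal F L)
    (h : ⁅A, (⊤ : LieSubmodule F L M)⁆ ≠ ⊥) :
    ∃ Y : LieSubmodule F L M,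
      ⁅A, (⊤ : LieSubmodule F L (M ⧸ Y))⁆ ≠ ⊥ ∧
      ∀ S : LieSubmodule F L (M ⧸ Y), S ≠ ⊥ →
        ⁅A, (⊤ : LieSubmodule F L (M ⧸ Y))⁆ ≤ S := by
  obtain ⟨Y, hY, hmax⟩ := (LieSubmodule.wellFoundedGT_of_noetherian F L M).wf.has_min
    {Y : LieSubmodule F L M | ¬ ⁅A, (⊤ : LieSubmodule F L M)⁆ ≤ Y}
    ⟨⊥, by simpa [le_bot_iff] using h⟩
  refine ⟨Y, ?_, ?_⟩
  · set π := LieSubmodule.Quotient.mk' Y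
    have htop : LieSubmodule.map π ⊤ = ⊤ := by
      rw [LieModuleHom.map_top, LieModuleHom.range_eq_top]
      exact LieSubmodule.Quotient.surjective_mk' Y
    rw [← htop, ← LieSubmodule.map_bracket_eq]
    intro hbot
    rw [← LieModuleHom.le_ker_iff_map, LieSubmodule.Quotient.mk'_ker] at hbot
    exact hY hbot
  · intro S hS
    set π := LieSubmodule.Quotient.mk' Y
    have hsurj := LieSubmodule.Quotient.surjective_mk' Y
    have hmapcomap : LieSubmodule.map π (LieSubmodule.comap π S) = S := by
      ext x
      simp only [LieSubmodule.mem_map, LieSubmodule.mem_comap]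
      constructor
      · rintro ⟨m, hm, rfl⟩; exact hm
      · intro hx; obtain ⟨m, rfl⟩ := hsurj x; exact ⟨m, hx, rfl⟩
    have hle : Y ≤ LieSubmodule.comap π S := by
      intro m hm
      rw [LieSubmodule.mem_comap]
      have : π m = 0 := (LieSubmodule.Quotient.mk_eq_zero Y).mpr hm
      rw [this]; exact S.zero_mem
    have hne : Y ≠ LieSubmodule.comap π S := by
      intro heq
      apply hS
      rw [← hmapcomap, ← heq, ← LieModuleHom.le_ker_iff_map,
        LieSubmodule.Quotient.mk'_ker]
    have hlt : Y < LieSubmodule.comap π S := lt_of_le_of_ne hle hne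
    have hAT : ⁅A, (⊤ : LieSubmodule F L M)⁆ ≤ LieSubmodule.comap π S := by
      by_contra hcon
      exact hmax _ hcon hlt
    have htop : LieSubmodule.map π ⊤ = ⊤ := by
      rw [LieModuleHom.map_top, LieModuleHom.range_eq_top]; exact hsurj
    calc ⁅A, (⊤ : LieSubmodule F L (M ⧸ Y))⁆ = LieSubmodule.map π ⁅A, ⊤⁆ := by
          rw [LieSubmodule.map_bracket_eq, htop]
      _ ≤ LieSubmodule.map π (LieSubmodule.comap π S) := LieSubmodule.map_mono hAT
      _ = S := hmapcomap

/-- Let `A` be an ideal of the finite-dimensional Lie algebra `L` and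
let `V` be a finite-dimensional `L`-module with `A·V ≠ 0`.  Then `V` has a section
`V' = X/Y` such that `A·V'` is nonzero and is the unique minimal submodule of `V'`
(it is contained in every nonzero submodule of `V'`). -/
theorem stmt12 (F : Type u) [Field F]
    (L : Type u) [LieRing L] [LieAlgebra F L] [FiniteDimensional F L]
    (A : LieIdeal F L)
    (V : Type u) [AddCommGroup V] [Module F V] [LieRingModule L V] [LieModule F L V]
    [FiniteDimensional F V]
    (hAV : ⁅A, (⊤ : LieSubmodule F L V)⁆ ≠ ⊥) :
    ∃ X Y : LieSubmodule F L V, Y ≤ X ∧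
      ⁅A, (⊤ : LieSubmodule F L (sect F L V X Y))⁆ ≠ ⊥ ∧
      ∀ S : LieSubmodule F L (sect F L V X Y), S ≠ ⊥ →
        ⁅A, (⊤ : LieSubmodule F L (sect F L V X Y))⁆ ≤ S := by

  classical
  set M := (↥(⊤ : LieSubmodule F L V)) with hM
  have h' : ⁅A, (⊤ : LieSubmodule F L M)⁆ ≠ ⊥ := by
    intro heq
    apply hAV
    rw [eq_bot_iff]
    rw [LieSubmodule.lie_le_iff]
    intro x hx v _
    have hmem : ⁅x, (⟨v, trivial⟩ : M)⁆ ∈ ⁅A, (⊤ : LieSubmodule F L M)⁆ :=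
      LieSubmodule.lie_mem_lie hx trivial
    rw [heq, LieSubmodule.mem_bot] at hmem
    have : (↑(⁅x, (⟨v, trivial⟩ : M)⁆) : V) = ⁅x, v⁆ :=
      LieSubmodule.coe_bracket _ x _
    rw [LieSubmodule.mem_bot, ← this, hmem]
    rfl
  obtain ⟨Y0, hY1, hY2⟩ := aux A h'
  refine ⟨⊤, LieSubmodule.map (⊤ : LieSubmodule F L V).incl Y0, le_top, ?_⟩
  set Ys := LieSubmodule.map (⊤ : LieSubmodule F L V).incl Y0 with hYs
  clear_value Ys
  have hcomap : LieSubmodule.comap (⊤ : LieSubmodule F L V).incl Ys = Y0 := by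
    rw [hYs]
    ext m
    simp only [LieSubmodule.mem_comap, LieSubmodule.mem_map]
    constructor
    · rintro ⟨m', hm', hmm⟩
      rwa [LieSubmodule.injective_incl _ hmm] at hm'
    · intro hm; exact ⟨m, hm, rfl⟩
  subst hcomap
  exact ⟨hY1, hY2⟩
end

section
/- Let F be a field and let 𝔉 be a formation of finite-dimensional soluble Lie algebras over F such that the locally defined formation loc(𝔉) equals a class 𝔥 with 𝔥 ≠ 𝔖, where 𝔖 is the class of all finite-dimensional soluble Lie algebras over F. Then 𝔉 ≠ 𝔥. -/
/-!
Common definitions: classes of finite-dimensional soluble Lie algebras over a field `F`,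
Schunck classes, projectors, strong containment, boundaries, avoidance classes,
formations, saturated formations, residuals, the quotient class `𝔥/𝔑`,
central/hypercentral modules (via split extensions), Fitting null components,
and locally defined formations.
-/

universe u

open SchunckLie

namespace SchunckLie

variable {F : Type u} [Field F]

/-- A chief factor of a soluble Lie algebra is abelian: `⁅A, A⁆ ≤ B`. -/
lemma chief_factor_abelian {L : Type u} [LieRing L] [LieAlgebra F L]
    [LieAlgebra.IsSolvable L] {A B : LieIdeal F L} (hBA : B < A)
    (hirr : LieModule.IsIrreducible F L (sect F L L A B)) :
    ⁅A, A⁆ ≤ B := by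
  set B' : LieSubmodule F L (↥A) := LieSubmodule.comap (LieSubmodule.incl (R := F) (L := L) (M := L) A) B with hB'
  set K : LieIdeal F L := ⁅A, A⁆ ⊔ B with hK
  have hKA : K ≤ A := sup_le (LieSubmodule.lie_le_right A A) hBA.le
  set S : LieSubmodule F L (sect F L L A B) :=
    (LieSubmodule.comap (LieSubmodule.incl (R := F) (L := L) (M := L) A) K).map (LieSubmodule.Quotient.mk' B') with hS
  rcases hirr.eq_bot_or_eq_top S with hbot | htop
  · -- image of K is trivial, so `⁅A,A⁆ ≤ K` maps into `B`
    intro z hz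
    have hzA : z ∈ A := LieSubmodule.lie_le_right A A hz
    have hmem : LieSubmodule.Quotient.mk' B' ⟨z, hzA⟩ ∈ S := by
      rw [hS, LieSubmodule.mem_map]
      exact ⟨⟨z, hzA⟩, by simpa using (le_sup_left (b := B) hz : z ∈ K), rfl⟩
    rw [hbot, LieSubmodule.mem_bot, LieSubmodule.Quotient.mk_eq_zero] at hmem
    exact hmem
  · -- image of K is everything, so `A ≤ K`, contradicting solubility
    exfalso
    have hAK : A ≤ K := by
      intro a ha
      have hmem : LieSubmodule.Quotient.mk' B' ⟨a, ha⟩ ∈ S := by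
        rw [htop]; trivial
      rw [hS, LieSubmodule.mem_map] at hmem
      obtain ⟨x, hxK, hx⟩ := hmem
      have hdiff : (⟨a, ha⟩ : ↥A) - x ∈ B' := by
        rw [← LieSubmodule.Quotient.mk_eq_zero, map_sub, hx, sub_self]
      have hdiffB : a - (x : L) ∈ B := hdiff
      have hxK' : (x : L) ∈ K := hxK
      have : (a - (x : L)) + (x : L) ∈ K :=
        K.add_mem (le_sup_right (a := ⁅A, A⁆) hdiffB) hxK'
      simpa using this
    have key : ∀ n : ℕ, A ≤ LieAlgebra.derivedSeriesOfIdeal F L n A ⊔ B := by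
      intro n
      induction n with
      | zero => exact le_sup_left
      | succ n ih =>
        refine hAK.trans (sup_le ?_ le_sup_right)
        calc ⁅A, A⁆ ≤ ⁅(LieAlgebra.derivedSeriesOfIdeal F L n A ⊔ B : LieIdeal F L),
            (LieAlgebra.derivedSeriesOfIdeal F L n A ⊔ B : LieIdeal F L)⁆ :=
              LieSubmodule.mono_lie ih ih
          _ ≤ LieAlgebra.derivedSeriesOfIdeal F L (n + 1) A ⊔ B := by
              rw [LieSubmodule.sup_lie, LieSubmodule.lie_sup, LieSubmodule.lie_sup,
                LieAlgebra.derivedSeriesOfIdeal_succ]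
              refine sup_le (sup_le le_sup_left ?_) (sup_le ?_ ?_)
              · exact (LieSubmodule.lie_le_right _ _).trans le_sup_right
              · exact (LieSubmodule.lie_le_left _ _).trans le_sup_right
              · exact (LieSubmodule.lie_le_right _ _).trans le_sup_right
    obtain ⟨k, hk⟩ := LieAlgebra.IsSolvable.solvable F L
    have hD : LieAlgebra.derivedSeriesOfIdeal F L k A ≤ ⊥ := by
      rw [← hk]
      exact LieAlgebra.derivedSeriesOfIdeal_le le_top le_rfl
    have : A ≤ B := (key k).trans (sup_le (hD.trans bot_le) le_rfl)
    exact hBA.not_ge this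

end SchunckLie


/-- If `𝔉` is a formation whose locally defined formation `loc(𝔉)`
equals a class `𝔥 ≠ 𝔖`, then `𝔉 ≠ 𝔥`. -/
theorem stmt15 (F : Type u) [Field F]
    (𝔉 : LieClass F) (h𝔉iso : IsoClosed F 𝔉) (h𝔉 : IsFormation F 𝔉)
    (hne : ¬ ClassEq F (locClass F 𝔉) (fullClass F)) :
    ¬ ClassEq F 𝔉 (locClass F 𝔉) := by
  intro heq
  apply hne
  intro L _ _ hL
  refine ⟨fun _ => trivial, fun _ => ?_⟩
  suffices claim : ∀ n : ℕ, ∀ (L' : Type u) [LieRing L'] [LieAlgebra F L'],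
      IsFDSol F L' → Module.finrank F L' ≤ n → locClass F 𝔉 L' from
    claim (Module.finrank F L) L hL le_rfl
  intro n
  induction n with
  | zero =>
    intro L' _ _ hL' hrank A B hBA _
    haveI := hL'.1
    have hsub : Subsingleton L' :=
      Module.finrank_zero_iff.mp (Nat.le_zero.mp hrank)
    obtain ⟨a, haA, haB⟩ := SetLike.exists_of_lt hBA
    exact absurd ((Subsingleton.elim a 0) ▸ B.zero_mem) haB
  | succ n ih =>
    intro L' _ _ hL' hrank A B hBA hirr
    haveI := hL'.1
    haveI := hL'.2
    set C : LieIdeal F L' := chiefCentraliser F A B with hC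
    -- the chief factor is abelian, hence `A ≤ C`
    have habel : ⁅A, A⁆ ≤ B := chief_factor_abelian hBA hirr
    have hAC : A ≤ C := by
      intro x hx
      show ∀ a ∈ A, ⁅x, a⁆ ∈ B
      intro a ha
      exact habel (LieSubmodule.lie_mem_lie hx ha)
    obtain ⟨a, haA, haB⟩ := SetLike.exists_of_lt hBA
    have ha0 : a ≠ 0 := fun h => haB (h ▸ B.zero_mem)
    -- `C ≠ ⊥`, so the quotient has strictly smaller dimension
    haveI : Nontrivial (↥(LieSubmodule.toSubmodule C)) :=
      ⟨⟨a, hAC haA⟩, 0, fun h => ha0 (by simpa using congrArg Subtype.val h)⟩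
    haveI hfdq : FiniteDimensional F (L' ⧸ C) :=
      (inferInstance : FiniteDimensional F (L' ⧸ LieSubmodule.toSubmodule C))
    haveI hsolq : LieAlgebra.IsSolvable (L' ⧸ C) := by
      have hsurj : Function.Surjective (quotMk F C) :=
        Submodule.mkQ_surjective _
      exact hsurj.lieAlgebra_isSolvable (f := quotMk F C)
    have hrankq : Module.finrank F (L' ⧸ C) ≤ n := by
      have h1 : Module.finrank F (L' ⧸ LieSubmodule.toSubmodule C) +
          Module.finrank F (↥(LieSubmodule.toSubmodule C)) = Module.finrank F L' :=
        Submodule.finrank_quotient_add_finrank _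
      have h2 : 0 < Module.finrank F (↥(LieSubmodule.toSubmodule C)) :=
        Module.finrank_pos_iff.mpr inferInstance
      have h0 : Module.finrank F (L' ⧸ C) =
          Module.finrank F (L' ⧸ LieSubmodule.toSubmodule C) := rfl
      omega
    have hQ : IsFDSol F (L' ⧸ C) := ⟨hfdq, hsolq⟩
    exact (heq (L' ⧸ C) hQ).mpr (ih (L' ⧸ C) hQ hrankq)
end
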